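/- arXiv:1005.0700 — 6 statements merged into one kernel-verified Lean document; each statement's English description precedes it below -/
import Mathlib

section
/- A function f : [a,b] × [c,d] → ℝ is co-ordinated convex if and only if for all t,s ∈ [0,1] and (x,u),(y,v) with x,y ∈ [a,b], u,v ∈ [c,d], one has f(tx+(1-t)y, su+(1-s)v) ≤ ts·f(x,u) + s(1-t)·f(y,u) + t(1-s)·f(x,v) + (1-t)(1-s)·f(y,v). -/
open Set

theorem coordinated_convex_iff
    (a b c d : ℝ) (hab : a < b) (hcd : c < d) (f : ℝ → ℝ → ℝ) :
    ((∀ y ∈ Icc c d, ConvexOn ℝ (Icc a b) (fun x => f x y)) ∧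
     (∀ x ∈ Icc a b, ConvexOn ℝ (Icc c d) (fun y => f x y))) ↔
    (∀ t ∈ Icc (0:ℝ) 1, ∀ s ∈ Icc (0:ℝ) 1,
      ∀ x ∈ Icc a b, ∀ y ∈ Icc a b, ∀ u ∈ Icc c d, ∀ v ∈ Icc c d,
        f (t*x + (1-t)*y) (s*u + (1-s)*v) ≤
          t*s * f x u + s*(1-t) * f y u + t*(1-s) * f x v
            + (1-t)*(1-s) * f y v) := by
  constructor
  · rintro ⟨hX, hY⟩ t ht s hs x hx y hy u hu v hv
    have hs1 : (0:ℝ) ≤ 1 - s := by linarith [hs.2]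
    have ht1 : (0:ℝ) ≤ 1 - t := by linarith [ht.2]
    have hmem : s*u + (1-s)*v ∈ Icc c d := by
      have := (convex_Icc c d) hu hv hs.1 hs1 (by ring)
      simpa using this
    have h1 : f (t*x + (1-t)*y) (s*u + (1-s)*v) ≤
        t * f x (s*u + (1-s)*v) + (1-t) * f y (s*u + (1-s)*v) := by
      have := (hX _ hmem).2 hx hy ht.1 ht1 (by ring)
      simpa using this
    have h2 : f x (s*u + (1-s)*v) ≤ s * f x u + (1-s) * f x v := by
      have := (hY x hx).2 hu hv hs.1 hs1 (by ring)
      simpa using this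
    have h3 : f y (s*u + (1-s)*v) ≤ s * f y u + (1-s) * f y v := by
      have := (hY y hy).2 hu hv hs.1 hs1 (by ring)
      simpa using this
    have h4 : t * f x (s*u + (1-s)*v) ≤ t * (s * f x u + (1-s) * f x v) :=
      mul_le_mul_of_nonneg_left h2 ht.1
    have h5 : (1-t) * f y (s*u + (1-s)*v) ≤ (1-t) * (s * f y u + (1-s) * f y v) :=
      mul_le_mul_of_nonneg_left h3 ht1
    nlinarith [h1, h4, h5]
  · intro h
    constructor
    · intro y0 hy0
      refine ⟨convex_Icc a b, ?_⟩
      intro x hx y hy t u ht hu htu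
      have := h t ⟨ht, by linarith⟩ 1 ⟨zero_le_one, le_refl 1⟩ x hx y hy y0 hy0 y0 hy0
      have hu' : u = 1 - t := by linarith
      subst hu'
      simp only [smul_eq_mul]
      have e : (1:ℝ)*y0 + (1-1)*y0 = y0 := by ring
      rw [e] at this
      nlinarith [this]
    · intro x0 hx0
      refine ⟨convex_Icc c d, ?_⟩
      intro u hu v hv s w hs hw hsw
      have := h 1 ⟨zero_le_one, le_refl 1⟩ s ⟨hs, by linarith⟩ x0 hx0 x0 hx0 u hu v hv
      have hw' : w = 1 - s := by linarith
      subst hw'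
      simp only [smul_eq_mul]
      have e : (1:ℝ)*x0 + (1-1)*x0 = x0 := by ring
      rw [e] at this
      nlinarith [this]
end

section
/- If f : [a,b] × [c,d] → ℝ is co-ordinated convex, then f((a+b)/2, (c+d)/2) ≤ (1/2)[(1/(b-a))∫ₐᵇ f(x,(c+d)/2) dx + (1/(d-c))∫_c^d f((a+b)/2, y) dy]. -/
/-! Each partial map of `f` through the centre of the rectangle is convex, so the one-dimensional
Hermite–Hadamard inequality bounds `f` at the centre by both averages; the claim is the mean of the two
bounds. The one-dimensional inequality comes from pairing `x` with its reflection `a + b - x`: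
convexity gives `g ((a + b) / 2) ≤ (g x + g (a + b - x)) / 2`, and the reflection preserves the integral. -/

open Set MeasureTheory

lemma ConvexOn.map_midpoint_le {s : Set ℝ} {g : ℝ → ℝ} (hg : ConvexOn ℝ s g) {x y : ℝ}
    (hx : x ∈ s) (hy : y ∈ s) : g ((x + y) / 2) ≤ (g x + g y) / 2 := by
  have h := hg.2 hx hy (by norm_num : (0 : ℝ) ≤ 1 / 2) (by norm_num : (0 : ℝ) ≤ 1 / 2) (by norm_num)
  have hmid : (1 / 2 : ℝ) • x + (1 / 2 : ℝ) • y = (x + y) / 2 := by simp only [smul_eq_mul]; ring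
  rw [hmid, smul_eq_mul, smul_eq_mul] at h
  linarith

lemma intervalIntegral.integral_comp_add_sub (a b : ℝ) (g : ℝ → ℝ) :
    ∫ x in a..b, g (a + b - x) = ∫ x in a..b, g x := by
  simp [intervalIntegral.integral_comp_sub_left]

theorem ConvexOn.map_midpoint_le_interval_average {a b : ℝ} (hab : a < b) {g : ℝ → ℝ}
    (hg : ConvexOn ℝ (Icc a b) g) (hint : IntervalIntegrable g volume a b) :
    g ((a + b) / 2) ≤ ⨍ x in a..b, g x := by
  have hint_refl : IntervalIntegrable (fun x => g (a + b - x)) volume a b := by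
    simpa using (hint.comp_sub_left (a + b)).symm
  have hpair : ∀ x ∈ Icc a b, g ((a + b) / 2) ≤ (g x + g (a + b - x)) / 2 := fun x hx => by
    have h := hg.map_midpoint_le (y := a + b - x) hx ⟨by linarith [hx.2], by linarith [hx.1]⟩
    rwa [add_sub_cancel] at h
  have hmono : (b - a) * g ((a + b) / 2) ≤ ∫ x in a..b, g x :=
    calc (b - a) * g ((a + b) / 2) = ∫ _ in a..b, g ((a + b) / 2) := by simp
      _ ≤ ∫ x in a..b, (g x + g (a + b - x)) / 2 :=
        intervalIntegral.integral_mono_on hab.le intervalIntegrable_const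
          ((hint.add hint_refl).div_const 2) hpair
      _ = ∫ x in a..b, g x := by
        rw [intervalIntegral.integral_div, intervalIntegral.integral_add hint hint_refl,
          intervalIntegral.integral_comp_add_sub]
        ring
  rw [interval_average_eq_div, le_div_iff₀ (sub_pos.2 hab)]
  linarith

theorem hadamard_coordinated_first
    (a b c d : ℝ) (hab : a < b) (hcd : c < d) (f : ℝ → ℝ → ℝ)
    (h1 : ∀ y ∈ Icc c d, ConvexOn ℝ (Icc a b) (fun x => f x y))
    (h2 : ∀ x ∈ Icc a b, ConvexOn ℝ (Icc c d) (fun y => f x y))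
    (hint1 : IntervalIntegrable (fun x => f x ((c+d)/2)) volume a b)
    (hint2 : IntervalIntegrable (fun y => f ((a+b)/2) y) volume c d) :
    f ((a+b)/2) ((c+d)/2) ≤
      (1/2) * ((1/(b-a)) * ∫ x in a..b, f x ((c+d)/2)
        + (1/(d-c)) * ∫ y in c..d, f ((a+b)/2) y) := by
  have hx := (h1 _ ⟨by linarith, by linarith⟩).map_midpoint_le_interval_average hab hint1
  have hy := (h2 _ ⟨by linarith, by linarith⟩).map_midpoint_le_interval_average hcd hint2
  rw [interval_average_eq, smul_eq_mul, ← one_div] at hx hy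
  -- The binder of the `x`-integral extends to the end of the statement, so its integrand also
  -- carries the (constant) `y`-average.
  rw [intervalIntegral.integral_add hint1 intervalIntegrable_const, intervalIntegral.integral_const,
    smul_eq_mul, mul_add, ← mul_assoc, one_div_mul_cancel (sub_ne_zero.2 hab.ne'), one_mul]
  linarith
end

section
/- If f : [a,b] × [c,d] → ℝ is co-ordinated convex, then (1/2)[(1/(b-a))∫ₐᵇ f(x,(c+d)/2) dx + (1/(d-c))∫_c^d f((a+b)/2, y) dy] ≤ (1/((b-a)(d-c))) ∫ₐᵇ∫_c^d f(x,y) dy dx. -/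
open Set MeasureTheory

lemma hh_midpoint {g : ℝ → ℝ} {c d : ℝ} (hcd : c < d)
    (hg : ConvexOn ℝ (Icc c d) g) (hgi : IntervalIntegrable g volume c d) :
    g ((c+d)/2) ≤ (1/(d-c)) * ∫ y in c..d, g y := by
  have hdc : (0:ℝ) < d - c := by linarith
  have hflip : IntervalIntegrable (fun y => g (c+d-y)) volume c d := by
    have := hgi.comp_sub_left (c+d)
    exact (by simpa using this : IntervalIntegrable _ volume d c).symm
  have hpt : ∀ y ∈ Icc c d, g ((c+d)/2) ≤ (g y + g (c+d-y))/2 := by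
    intro y hy
    have hy' : c + d - y ∈ Icc c d := ⟨by linarith [hy.2], by linarith [hy.1]⟩
    have h := hg.2 hy hy' (by norm_num : (0:ℝ) ≤ 1/2) (by norm_num : (0:ℝ) ≤ 1/2)
      (by norm_num : (1:ℝ)/2 + 1/2 = 1)
    have e : (1/2 : ℝ) • y + (1/2 : ℝ) • (c+d-y) = (c+d)/2 := by
      simp [smul_eq_mul]; ring
    rw [e] at h
    rw [smul_eq_mul, smul_eq_mul] at h; linarith
  have key : ∫ _y in c..d, g ((c+d)/2) ≤ ∫ y in c..d, (g y + g (c+d-y))/2 := by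
    apply intervalIntegral.integral_mono_on hcd.le (intervalIntegrable_const)
      ((hgi.add hflip).div_const 2) hpt
  rw [intervalIntegral.integral_const] at key
  have e2 : ∫ y in c..d, (g y + g (c+d-y))/2
      = (1/2) * ((∫ y in c..d, g y) + ∫ y in c..d, g (c+d-y)) := by
    rw [intervalIntegral.integral_div, intervalIntegral.integral_add hgi hflip]
    ring
  have e3 : (∫ y in c..d, g (c+d-y)) = ∫ y in c..d, g y := by
    rw [intervalIntegral.integral_comp_sub_left g (c+d)]
    norm_num
  rw [e2, e3] at key
  rw [smul_eq_mul] at key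
  rw [one_div, inv_mul_eq_div, le_div_iff₀ hdc]
  nlinarith [key]

theorem hadamard_coordinated_second
    (a b c d : ℝ) (hab : a < b) (hcd : c < d) (f : ℝ → ℝ → ℝ)
    (h1 : ∀ y ∈ Icc c d, ConvexOn ℝ (Icc a b) (fun x => f x y))
    (h2 : ∀ x ∈ Icc a b, ConvexOn ℝ (Icc c d) (fun y => f x y))
    (hint : IntegrableOn (fun p : ℝ × ℝ => f p.1 p.2) (Icc a b ×ˢ Icc c d))
    (hint1 : IntervalIntegrable (fun x => f x ((c+d)/2)) volume a b)
    (hint2 : IntervalIntegrable (fun y => f ((a+b)/2) y) volume c d)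
    (hslice : ∀ x ∈ Icc a b, IntervalIntegrable (fun y => f x y) volume c d)
    (hiter : IntervalIntegrable (fun x => ∫ y in c..d, f x y) volume a b) :
    (1/2) * ((1/(b-a)) * ∫ x in a..b, f x ((c+d)/2)
        + (1/(d-c)) * ∫ y in c..d, f ((a+b)/2) y) ≤
      (1/((b-a)*(d-c))) * ∫ x in a..b, ∫ y in c..d, f x y := by
  have hba : (0:ℝ) < b - a := by linarith
  have hdc : (0:ℝ) < d - c := by linarith
  set J := ∫ x in a..b, ∫ y in c..d, f x y with hJ
  -- First term
  have hA : (∫ x in a..b, f x ((c+d)/2)) ≤ (1/(d-c)) * J := by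
    have mono := intervalIntegral.integral_mono_on hab.le hint1 (hiter.const_mul (1/(d-c)))
      (fun x hx => hh_midpoint hcd (h2 x hx) (hslice x hx))
    rwa [intervalIntegral.integral_const_mul] at mono
  -- Product integrability over Ioc × Ioc
  have hprod : Integrable (fun p : ℝ × ℝ => f p.1 p.2)
      ((volume.restrict (Ioc a b)).prod (volume.restrict (Ioc c d))) := by
    rw [Measure.prod_restrict]
    have h := hint.mono_set (Set.prod_mono Ioc_subset_Icc_self Ioc_subset_Icc_self)
    rwa [IntegrableOn, Measure.volume_eq_prod ℝ ℝ] at h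
  -- Second term
  have hB : (∫ y in c..d, f ((a+b)/2) y) ≤ (1/(b-a)) * J := by
    have haey : ∀ᵐ y ∂(volume.restrict (Ioc c d)),
        Integrable (fun x => f x y) (volume.restrict (Ioc a b)) := hprod.prod_left_ae
    have hmem : ∀ᵐ y ∂(volume.restrict (Ioc c d)), y ∈ Ioc c d :=
      ae_restrict_mem measurableSet_Ioc
    have haele : ∀ᵐ y ∂(volume.restrict (Ioc c d)),
        f ((a+b)/2) y ≤ (1/(b-a)) * ∫ x in Ioc a b, f x y := by
      filter_upwards [haey, hmem] with y hy hymem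
      have hyIcc : y ∈ Icc c d := Ioc_subset_Icc_self hymem
      have hii : IntervalIntegrable (fun x => f x y) volume a b :=
        (intervalIntegrable_iff_integrableOn_Ioc_of_le hab.le).mpr hy
      have := hh_midpoint hab (h1 y hyIcc) hii
      rwa [intervalIntegral.integral_of_le hab.le] at this
    have hL : Integrable (fun y => f ((a+b)/2) y) (volume.restrict (Ioc c d)) :=
      (intervalIntegrable_iff_integrableOn_Ioc_of_le hcd.le).mp hint2
    have hR : Integrable (fun y => (1/(b-a)) * ∫ x in Ioc a b, f x y)
        (volume.restrict (Ioc c d)) := (hprod.integral_prod_right).const_mul _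
    have mono := integral_mono_ae hL hR haele
    have swap : (∫ y in Ioc c d, ∫ x in Ioc a b, f x y)
        = ∫ x in Ioc a b, ∫ y in Ioc c d, f x y :=
      (integral_integral_swap hprod).symm
    have hJ' : (∫ x in Ioc a b, ∫ y in Ioc c d, f x y) = J := by
      rw [hJ, intervalIntegral.integral_of_le hab.le]
      refine setIntegral_congr_fun measurableSet_Ioc (fun x _ => ?_)
      rw [intervalIntegral.integral_of_le hcd.le]
    calc (∫ y in c..d, f ((a+b)/2) y)
        = ∫ y in Ioc c d, f ((a+b)/2) y := intervalIntegral.integral_of_le hcd.le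
      _ ≤ ∫ y in Ioc c d, (1/(b-a)) * ∫ x in Ioc a b, f x y := mono
      _ = (1/(b-a)) * ∫ y in Ioc c d, ∫ x in Ioc a b, f x y := integral_const_mul _ _
      _ = (1/(b-a)) * J := by rw [swap, hJ']
  -- Combine (note: the first interval integral in the goal contains the whole sum)
  rw [intervalIntegral.integral_add hint1 intervalIntegrable_const,
    intervalIntegral.integral_const, smul_eq_mul]
  set A := ∫ x in a..b, f x ((c+d)/2) with hAdef
  set B := ∫ y in c..d, f ((a+b)/2) y with hBdef
  have expand : 1/2 * (1/(b-a) * (A + (b-a) * (1/(d-c) * B)))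
      = 1/2 * (1/(b-a)) * A + 1/2 * (1/(d-c)) * B := by
    field_simp
  have er : 1/((b-a)*(d-c)) * J
      = 1/2 * (1/(b-a)) * (1/(d-c)*J) + 1/2 * (1/(d-c)) * (1/(b-a)*J) := by
    field_simp
    ring
  have r1 := mul_le_mul_of_nonneg_left hA (show (0:ℝ) ≤ 1/2*(1/(b-a)) by positivity)
  have r2 := mul_le_mul_of_nonneg_left hB (show (0:ℝ) ≤ 1/2*(1/(d-c)) by positivity)
  linarith [expand, er, r1, r2]
end

section
/- If f : [a,b] × [c,d] → ℝ is co-ordinated convex, then (1/((b-a)(d-c))) ∫ₐᵇ∫_c^d f(x,y) dy dx ≤ (1/4)[(1/(b-a))∫ₐᵇ f(x,c) dx + (1/(b-a))∫ₐᵇ f(x,d) dx + (1/(d-c))∫_c^d f(a,y) dy + (1/(d-c))∫_c^d f(b,y) dy]. -/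
open Set MeasureTheory

/-!
A convex `g` on `[a, b]` lies below its chord, so `∫ₐᵇ g ≤ (b - a) (g a + g b) / 2`.
Applying this to the slices `y ↦ f x y` and integrating in `x` bounds the double integral by
`(d - c) / 2` times the integrals of `f` along the edges `y = c` and `y = d`; by Fubini the same
argument in the other order bounds it by `(b - a) / 2` times the integrals along `x = a` and
`x = b`. The theorem is the average of the two bounds.
-/

theorem ConvexOn.le_chord {g : ℝ → ℝ} {a b x : ℝ} (hab : a < b) (hg : ConvexOn ℝ (Icc a b) g)
    (hx : x ∈ Icc a b) : g x ≤ ((b - x) * g a + (x - a) * g b) / (b - a) := by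
  have hba : 0 < b - a := sub_pos.2 hab
  have key := hg.2 (left_mem_Icc.2 hab.le) (right_mem_Icc.2 hab.le)
    (div_nonneg (sub_nonneg.2 hx.2) hba.le) (div_nonneg (sub_nonneg.2 hx.1) hba.le)
    (by field_simp; ring)
  have hcomb : ((b - x) / (b - a)) • a + ((x - a) / (b - a)) • b = x := by
    simp only [smul_eq_mul]; field_simp; ring
  rw [hcomb] at key
  exact key.trans_eq (by simp only [smul_eq_mul]; ring)

theorem ConvexOn.intervalIntegral_le {g : ℝ → ℝ} {a b : ℝ} (hab : a < b)
    (hg : ConvexOn ℝ (Icc a b) g) (hgi : IntervalIntegrable g volume a b) :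
    ∫ x in a..b, g x ≤ (b - a) * (g a + g b) / 2 := by
  calc ∫ x in a..b, g x
      ≤ ∫ x in a..b, ((b - x) * g a + (x - a) * g b) / (b - a) :=
        intervalIntegral.integral_mono_on hab.le hgi
          (Continuous.intervalIntegrable (by fun_prop) a b) fun x hx => hg.le_chord hab hx
    _ = (b - a) * (g a + g b) / 2 := by
        have hba : b - a ≠ 0 := (sub_pos.2 hab).ne'
        have hlin (p q : ℝ) : IntervalIntegrable (fun x => (p - x) * q) volume a b :=
          (continuous_const.sub continuous_id).mul continuous_const |>.intervalIntegrable a b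
        have hlin' (p q : ℝ) : IntervalIntegrable (fun x => (x - p) * q) volume a b :=
          (continuous_id.sub continuous_const).mul continuous_const |>.intervalIntegrable a b
        rw [intervalIntegral.integral_div, intervalIntegral.integral_add (hlin _ _) (hlin' _ _),
          intervalIntegral.integral_mul_const, intervalIntegral.integral_mul_const,
          intervalIntegral.integral_comp_sub_left (fun x => x),
          intervalIntegral.integral_comp_sub_right (fun x => x)]
        simp only [integral_id]
        field_simp
        ring

theorem intervalIntegral.integral_add_const {g : ℝ → ℝ} {a b : ℝ} (C : ℝ)
    (hg : IntervalIntegrable g volume a b) :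
    ∫ x in a..b, (g x + C) = (∫ x in a..b, g x) + (b - a) * C := by
  rw [intervalIntegral.integral_add hg intervalIntegrable_const, intervalIntegral.integral_const,
    smul_eq_mul]

theorem intervalIntegral_intervalIntegral_le_of_convexOn_snd {f : ℝ → ℝ → ℝ} {a b c d : ℝ}
    (hab : a ≤ b) (hcd : c < d) (hconv : ∀ x ∈ Icc a b, ConvexOn ℝ (Icc c d) (f x))
    (hf : IntegrableOn (Function.uncurry f) (Icc a b ×ˢ Icc c d))
    (hc : IntervalIntegrable (f · c) volume a b) (hd : IntervalIntegrable (f · d) volume a b) :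
    ∫ x in a..b, ∫ y in c..d, f x y ≤
      (d - c) * ((∫ x in a..b, f x c) + ∫ x in a..b, f x d) / 2 := by
  have hprod : Integrable (Function.uncurry f)
      ((volume.restrict (Ioc a b)).prod (volume.restrict (Ioc c d))) := by
    rw [Measure.prod_restrict, ← Measure.volume_eq_prod]
    exact hf.mono_set (prod_mono Ioc_subset_Icc_self Ioc_subset_Icc_self)
  calc ∫ x in a..b, ∫ y in c..d, f x y
      ≤ ∫ x in a..b, (d - c) * (f x c + f x d) / 2 := by
        simp only [intervalIntegral.integral_of_le hab, intervalIntegral.integral_of_le hcd.le]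
        refine integral_mono_ae hprod.integral_prod_left (((hc.1.add hd.1).const_mul _).div_const 2) ?_
        filter_upwards [hprod.prod_right_ae, ae_restrict_mem measurableSet_Ioc] with x hx hxI
        rw [← intervalIntegral.integral_of_le hcd.le]
        exact (hconv x (Ioc_subset_Icc_self hxI)).intervalIntegral_le hcd
          ((intervalIntegrable_iff_integrableOn_Ioc_of_le hcd.le).2 hx)
    _ = _ := by
        rw [intervalIntegral.integral_div, intervalIntegral.integral_const_mul,
          intervalIntegral.integral_add hc hd]

theorem hadamard_coordinated_third_general
    (a b c d : ℝ) (hab : a < b) (hcd : c < d) (f : ℝ → ℝ → ℝ)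
    (h1 : ∀ y ∈ Icc c d, ConvexOn ℝ (Icc a b) (fun x => f x y))
    (h2 : ∀ x ∈ Icc a b, ConvexOn ℝ (Icc c d) (fun y => f x y))
    (hint : IntegrableOn (fun p : ℝ × ℝ => f p.1 p.2) (Icc a b ×ˢ Icc c d))
    (hbc : IntervalIntegrable (fun x => f x c) volume a b)
    (hbd : IntervalIntegrable (fun x => f x d) volume a b)
    (hba : IntervalIntegrable (fun y => f a y) volume c d)
    (hbb : IntervalIntegrable (fun y => f b y) volume c d) :
    (1/((b-a)*(d-c))) * ∫ x in a..b, ∫ y in c..d, f x y ≤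
      (1/4) * ((1/(b-a)) * ∫ x in a..b, f x c
        + (1/(b-a)) * ∫ x in a..b, f x d
        + (1/(d-c)) * ∫ y in c..d, f a y
        + (1/(d-c)) * ∫ y in c..d, f b y) := by
  have hedges_cd := intervalIntegral_intervalIntegral_le_of_convexOn_snd hab.le hcd h2 hint hbc hbd
  have hedges_ab := intervalIntegral_intervalIntegral_le_of_convexOn_snd hcd.le hab h1 hint.swap hba hbb
  have hfubini : ∫ x in a..b, ∫ y in c..d, f x y = ∫ y in c..d, ∫ x in a..b, f x y :=
    intervalIntegral_intervalIntegral_swap <| by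
      rw [uIoc_of_le hab.le, uIoc_of_le hcd.le]
      exact hint.mono_set (prod_mono Ioc_subset_Icc_self Ioc_subset_Icc_self)
  -- Each `∫` on the right extends to the end of the expression: the later terms are constants
  -- inside the earlier integrals.
  rw [intervalIntegral.integral_add_const _ hbc, intervalIntegral.integral_add_const _ hbd,
    intervalIntegral.integral_add_const _ hba]
  have hba_pos : 0 < b - a := sub_pos.2 hab
  have hdc_pos : 0 < d - c := sub_pos.2 hcd
  rw [one_div, inv_mul_le_iff₀ (by positivity)]
  field_simp
  linarith

theorem hadamard_coordinated_third
    (a b c d : ℝ) (hab : a < b) (hcd : c < d) (f : ℝ → ℝ → ℝ)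
    (h1 : ∀ y ∈ Icc c d, ConvexOn ℝ (Icc a b) (fun x => f x y))
    (h2 : ∀ x ∈ Icc a b, ConvexOn ℝ (Icc c d) (fun y => f x y))
    (hint : IntegrableOn (fun p : ℝ × ℝ => f p.1 p.2) (Icc a b ×ˢ Icc c d))
    (hslice : ∀ x ∈ Icc a b, IntervalIntegrable (fun y => f x y) volume c d)
    (hiter : IntervalIntegrable (fun x => ∫ y in c..d, f x y) volume a b)
    (hbc : IntervalIntegrable (fun x => f x c) volume a b)
    (hbd : IntervalIntegrable (fun x => f x d) volume a b)
    (hba : IntervalIntegrable (fun y => f a y) volume c d)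
    (hbb : IntervalIntegrable (fun y => f b y) volume c d) :
    (1/((b-a)*(d-c))) * ∫ x in a..b, ∫ y in c..d, f x y ≤
      (1/4) * ((1/(b-a)) * ∫ x in a..b, f x c
        + (1/(b-a)) * ∫ x in a..b, f x d
        + (1/(d-c)) * ∫ y in c..d, f a y
        + (1/(d-c)) * ∫ y in c..d, f b y) :=
  hadamard_coordinated_third_general a b c d hab hcd f h1 h2 hint hbc hbd hba hbb
end

section
/- If f : [a,b] × [c,d] → ℝ is co-ordinated convex, then (1/4)[(1/(b-a))∫ₐᵇ f(x,c) dx + (1/(b-a))∫ₐᵇ f(x,d) dx + (1/(d-c))∫_c^d f(a,y) dy + (1/(d-c))∫_c^d f(b,y) dy] ≤ (f(a,c) + f(a,d) + f(b,c) + f(b,d))/4. -/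
/-!
A convex function on `[a, b]` lies below its chord, whose mean value over `[a, b]` is the mean of
the endpoint values; this is the right half of the Hermite–Hadamard inequality. Applying it to the
four edges of the rectangle (where `f` is convex in one variable) and averaging the four
inequalities gives the claim.
-/

open Set MeasureTheory

namespace intervalIntegral

theorem integral_add_const_s5 {E : Type*} [NormedAddCommGroup E] [NormedSpace ℝ E] [CompleteSpace E]
    {f : ℝ → E} {a b : ℝ} (hf : IntervalIntegrable f volume a b) (c : E) :
    ∫ x in a..b, (f x + c) = (∫ x in a..b, f x) + (b - a) • c := by
  rw [integral_add hf intervalIntegrable_const, integral_const]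

theorem integral_chord (a b u v : ℝ) :
    ∫ x in a..b, ((b - x) * u + (x - a) * v) / (b - a) = (b - a) * ((u + v) / 2) := by
  rcases eq_or_ne a b with rfl | hab
  · simp
  have hba : b - a ≠ 0 := sub_ne_zero.2 hab.symm
  have haffine : (fun x => ((b - x) * u + (x - a) * v) / (b - a)) =
      fun x => (b * u - a * v) / (b - a) + x * ((v - u) / (b - a)) := by
    funext x; ring
  rw [haffine, integral_add intervalIntegrable_const (intervalIntegrable_id.mul_const _),
    integral_const, integral_mul_const, integral_id, smul_eq_mul]
  field_simp
  ring

end intervalIntegral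

namespace ConvexOn

variable {a b : ℝ} {g : ℝ → ℝ}

theorem le_chord_s5 (hg : ConvexOn ℝ (Icc a b) g) (hab : a < b) {x : ℝ} (hx : x ∈ Icc a b) :
    g x ≤ ((b - x) * g a + (x - a) * g b) / (b - a) := by
  have hba : 0 < b - a := sub_pos.2 hab
  have hcomb : ((b - x) / (b - a)) • a + ((x - a) / (b - a)) • b = x := by
    simp only [smul_eq_mul]; field_simp; ring
  have key := hg.2 (left_mem_Icc.2 hab.le) (right_mem_Icc.2 hab.le)
    (div_nonneg (sub_nonneg.2 hx.2) hba.le) (div_nonneg (sub_nonneg.2 hx.1) hba.le)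
    (by field_simp; ring)
  rw [hcomb] at key
  simp only [smul_eq_mul] at key
  rwa [add_div, mul_div_right_comm, mul_div_right_comm (x - a)]

theorem intervalIntegral_le_s5 (hg : ConvexOn ℝ (Icc a b) g) (hab : a < b)
    (hi : IntervalIntegrable g volume a b) :
    ∫ x in a..b, g x ≤ (b - a) * ((g a + g b) / 2) := by
  rw [← intervalIntegral.integral_chord]
  refine intervalIntegral.integral_mono_on hab.le hi ?_ fun x hx => hg.le_chord_s5 hab hx
  exact Continuous.intervalIntegrable (by fun_prop) _ _

end ConvexOn

theorem hadamard_coordinated_fourth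
    (a b c d : ℝ) (hab : a < b) (hcd : c < d) (f : ℝ → ℝ → ℝ)
    (h1 : ∀ y ∈ Icc c d, ConvexOn ℝ (Icc a b) (fun x => f x y))
    (h2 : ∀ x ∈ Icc a b, ConvexOn ℝ (Icc c d) (fun y => f x y))
    (hbc : IntervalIntegrable (fun x => f x c) volume a b)
    (hbd : IntervalIntegrable (fun x => f x d) volume a b)
    (hba : IntervalIntegrable (fun y => f a y) volume c d)
    (hbb : IntervalIntegrable (fun y => f b y) volume c d) :
    (1/4) * ((1/(b-a)) * ∫ x in a..b, f x c
        + (1/(b-a)) * ∫ x in a..b, f x d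
        + (1/(d-c)) * ∫ y in c..d, f a y
        + (1/(d-c)) * ∫ y in c..d, f b y) ≤
      (f a c + f a d + f b c + f b d) / 4 := by
  have hc := (h1 c (left_mem_Icc.2 hcd.le)).intervalIntegral_le_s5 hab hbc
  have hd := (h1 d (right_mem_Icc.2 hcd.le)).intervalIntegral_le_s5 hab hbd
  have ha := (h2 a (left_mem_Icc.2 hab.le)).intervalIntegral_le_s5 hcd hba
  have hb := (h2 b (right_mem_Icc.2 hab.le)).intervalIntegral_le_s5 hcd hbb
  -- Each `∫` binds up to the end of the sum, so the left side is a nested integral of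
  -- integrands of the form `f + const`.
  rw [intervalIntegral.integral_add_const_s5 hbc, intervalIntegral.integral_add_const_s5 hbd,
    intervalIntegral.integral_add_const_s5 hba, smul_eq_mul, smul_eq_mul, smul_eq_mul]
  have hba_pos : 0 < b - a := sub_pos.2 hab
  have hdc_pos : 0 < d - c := sub_pos.2 hcd
  field_simp
  linarith [mul_le_mul_of_nonneg_right hc hdc_pos.le, mul_le_mul_of_nonneg_right hd hdc_pos.le,
    mul_le_mul_of_nonneg_left ha hba_pos.le, mul_le_mul_of_nonneg_left hb hba_pos.le]
end

section
/- If f : [a,b] × [c,d] → ℝ is co-ordinated convex, then f((a+b)/2, (c+d)/2) ≤ (1/((b-a)(d-c))) ∫ₐᵇ∫_c^d f(x,y) dy dx ≤ (f(a,c) + f(a,d) + f(b,c) + f(b,d))/4. -/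
/-!
Pairing each point `x` of `[a, b]` with its reflection `a + b - x`, convexity of `g` gives
`2 g((a+b)/2) ≤ g x + g (a + b - x) ≤ g a + g b`; integrating over `[a, b]` yields the
one-dimensional bounds `(b - a) g((a+b)/2) ≤ ∫ g ≤ (b - a) (g a + g b) / 2`.
On the rectangle, `x ↦ ∫_c^d f x y dy` is convex as an integral of convex functions, so the
one-dimensional bounds apply first in `y` and then in `x`. Convexity alone supplies every
integrability fact needed: a convex function on `[a, b]` is continuous on `(a, b)` and, by the same
reflection, bounded between `2 g((a+b)/2) - max (g a) (g b)` and `max (g a) (g b)`.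
-/

open Set MeasureTheory

theorem IntervalIntegrable.comp_add_sub {a b : ℝ} {g : ℝ → ℝ}
    (hg : IntervalIntegrable g volume a b) :
    IntervalIntegrable (fun x => g (a + b - x)) volume a b := by
  simpa using (hg.comp_sub_left (a + b)).symm

theorem intervalIntegral.integral_add_comp_add_sub {a b : ℝ} {g : ℝ → ℝ}
    (hg : IntervalIntegrable g volume a b) :
    ∫ x in a..b, (g x + g (a + b - x)) = 2 * ∫ x in a..b, g x := by
  have hreflect : ∫ x in a..b, g (a + b - x) = ∫ x in a..b, g x := by
    simp [intervalIntegral.integral_comp_sub_left g (a + b)]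
  rw [intervalIntegral.integral_add hg hg.comp_add_sub, hreflect, two_mul]

namespace ConvexOn

variable {a b : ℝ} {g : ℝ → ℝ}

theorem add_map_sub_le (hg : ConvexOn ℝ (Icc a b) g) {x : ℝ} (hx : x ∈ Icc a b) :
    g x + g (a + b - x) ≤ g a + g b := by
  have ha : a ∈ Icc a b := left_mem_Icc.2 (hx.1.trans hx.2)
  have hb : b ∈ Icc a b := right_mem_Icc.2 (hx.1.trans hx.2)
  rw [← segment_eq_Icc (hx.1.trans hx.2)] at hx
  obtain ⟨s, t, hs, ht, hst, rfl⟩ := hx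
  have hreflect : a + b - (s • a + t • b) = t • a + s • b := by
    simp only [smul_eq_mul]; linear_combination (-(a + b)) * hst
  rw [hreflect]
  have h₁ := hg.2 ha hb hs ht hst
  have h₂ := hg.2 ha hb ht hs (by linarith)
  simp only [smul_eq_mul] at h₁ h₂ ⊢
  linear_combination h₁ + h₂ + (g a + g b) * hst

theorem two_mul_map_midpoint_le (hg : ConvexOn ℝ (Icc a b) g) {x : ℝ} (hx : x ∈ Icc a b) :
    2 * g ((a + b) / 2) ≤ g x + g (a + b - x) := by
  have hx' : a + b - x ∈ Icc a b := ⟨by linarith [hx.2], by linarith [hx.1]⟩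
  have h := hg.2 hx hx' (by norm_num : (0 : ℝ) ≤ 1 / 2) (by norm_num : (0 : ℝ) ≤ 1 / 2)
    (by norm_num)
  rw [show (1 / 2 : ℝ) • x + (1 / 2 : ℝ) • (a + b - x) = (a + b) / 2 by
    simp only [smul_eq_mul]; ring] at h
  simp only [smul_eq_mul] at h
  linarith

theorem intervalIntegrable (hg : ConvexOn ℝ (Icc a b) g) (hab : a ≤ b) :
    IntervalIntegrable g volume a b := by
  set M := max (g a) (g b)
  have hle_max : ∀ x ∈ Icc a b, g x ≤ M := fun x hx =>
    hg.le_on_segment (left_mem_Icc.2 hab) (right_mem_Icc.2 hab) (by rwa [segment_eq_Icc hab])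
  have hcont : ContinuousOn g (Ioo a b) :=
    (hg.subset Ioo_subset_Icc_self (convex_Ioo a b)).continuousOn isOpen_Ioo
  rw [intervalIntegrable_iff_integrableOn_Ioo_of_le hab]
  refine IntegrableOn.of_bound measure_Ioo_lt_top
    (hcont.aestronglyMeasurable measurableSet_Ioo) (max |2 * g ((a + b) / 2) - M| |M|) ?_
  filter_upwards [ae_restrict_mem measurableSet_Ioo] with x hx
  replace hx : x ∈ Icc a b := Ioo_subset_Icc_self hx
  exact abs_le_max_abs_abs
    (by linarith [hg.two_mul_map_midpoint_le hx,
      hle_max (a + b - x) ⟨by linarith [hx.2], by linarith [hx.1]⟩])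
    (hle_max x hx)

theorem mul_map_midpoint_le_intervalIntegral (hg : ConvexOn ℝ (Icc a b) g) (hab : a ≤ b) :
    (b - a) * g ((a + b) / 2) ≤ ∫ x in a..b, g x := by
  have hgi := hg.intervalIntegrable hab
  have h := intervalIntegral.integral_mono_on hab intervalIntegrable_const
    (hgi.add hgi.comp_add_sub) fun x hx => hg.two_mul_map_midpoint_le hx
  rw [intervalIntegral.integral_const, smul_eq_mul,
    intervalIntegral.integral_add_comp_add_sub hgi] at h
  linarith

theorem intervalIntegral_le_mul_add_div_two (hg : ConvexOn ℝ (Icc a b) g) (hab : a ≤ b) :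
    ∫ x in a..b, g x ≤ (b - a) * ((g a + g b) / 2) := by
  have hgi := hg.intervalIntegrable hab
  have h := intervalIntegral.integral_mono_on hab (hgi.add hgi.comp_add_sub)
    intervalIntegrable_const fun x hx => hg.add_map_sub_le hx
  rw [intervalIntegral.integral_const, smul_eq_mul,
    intervalIntegral.integral_add_comp_add_sub hgi] at h
  linarith

end ConvexOn

theorem convexOn_intervalIntegral {E : Type*} [AddCommMonoid E] [Module ℝ E] {s : Set E}
    {c d : ℝ} (hcd : c ≤ d) {f : E → ℝ → ℝ} (hconv : ∀ y ∈ Icc c d, ConvexOn ℝ s (f · y))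
    (hint : ∀ x ∈ s, IntervalIntegrable (f x) volume c d) :
    ConvexOn ℝ s fun x => ∫ y in c..d, f x y := by
  simp_rw [intervalIntegral.integral_of_le hcd]
  refine integral_convexOn_of_integrand_ae (f := fun y x => f x y)
    (hconv c (left_mem_Icc.2 hcd)).1 ?_ fun x hx => (hint x hx).1
  filter_upwards [ae_restrict_mem measurableSet_Ioc] with y hy
  exact hconv y (Ioc_subset_Icc_self hy)

theorem hadamard_coordinated_two_dim_general
    (a b c d : ℝ) (hab : a < b) (hcd : c < d) (f : ℝ → ℝ → ℝ)
    (h1 : ∀ y ∈ Icc c d, ConvexOn ℝ (Icc a b) (fun x => f x y))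
    (h2 : ∀ x ∈ Icc a b, ConvexOn ℝ (Icc c d) (fun y => f x y)) :
    f ((a+b)/2) ((c+d)/2) ≤
      (1/((b-a)*(d-c))) * ∫ x in a..b, ∫ y in c..d, f x y ∧
    (1/((b-a)*(d-c))) * ∫ x in a..b, ∫ y in c..d, f x y ≤
      (f a c + f a d + f b c + f b d) / 4 := by
  have hF : ConvexOn ℝ (Icc a b) fun x => ∫ y in c..d, f x y :=
    convexOn_intervalIntegral hcd.le h1 fun x hx => (h2 x hx).intervalIntegrable hcd.le
  have hmid : (a + b) / 2 ∈ Icc a b := ⟨by linarith, by linarith⟩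
  have harea : 0 < (b - a) * (d - c) := mul_pos (sub_pos.2 hab) (sub_pos.2 hcd)
  rw [one_div, le_inv_mul_iff₀ harea, inv_mul_le_iff₀ harea]
  constructor
  · calc (b - a) * (d - c) * f ((a + b) / 2) ((c + d) / 2)
        = (b - a) * ((d - c) * f ((a + b) / 2) ((c + d) / 2)) := by ring
      _ ≤ (b - a) * ∫ y in c..d, f ((a + b) / 2) y := by
        gcongr; exact (h2 _ hmid).mul_map_midpoint_le_intervalIntegral hcd.le
      _ ≤ ∫ x in a..b, ∫ y in c..d, f x y := hF.mul_map_midpoint_le_intervalIntegral hab.le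
  · calc ∫ x in a..b, ∫ y in c..d, f x y
        ≤ (b - a) * ((∫ y in c..d, f a y) + (∫ y in c..d, f b y)) / 2 := by
          rw [mul_div_assoc]; exact hF.intervalIntegral_le_mul_add_div_two hab.le
      _ ≤ (b - a) * ((d - c) * ((f a c + f a d) / 2) + (d - c) * ((f b c + f b d) / 2)) / 2 := by
        gcongr
        · exact (h2 a (left_mem_Icc.2 hab.le)).intervalIntegral_le_mul_add_div_two hcd.le
        · exact (h2 b (right_mem_Icc.2 hab.le)).intervalIntegral_le_mul_add_div_two hcd.le
      _ = (b - a) * (d - c) * ((f a c + f a d + f b c + f b d) / 4) := by ring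

theorem hadamard_coordinated_two_dim
    (a b c d : ℝ) (hab : a < b) (hcd : c < d) (f : ℝ → ℝ → ℝ)
    (h1 : ∀ y ∈ Icc c d, ConvexOn ℝ (Icc a b) (fun x => f x y))
    (h2 : ∀ x ∈ Icc a b, ConvexOn ℝ (Icc c d) (fun y => f x y))
    (hint : IntegrableOn (fun p : ℝ × ℝ => f p.1 p.2) (Icc a b ×ˢ Icc c d))
    (hslice : ∀ x ∈ Icc a b, IntervalIntegrable (fun y => f x y) volume c d)
    (hiter : IntervalIntegrable (fun x => ∫ y in c..d, f x y) volume a b) :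
    f ((a+b)/2) ((c+d)/2) ≤
      (1/((b-a)*(d-c))) * ∫ x in a..b, ∫ y in c..d, f x y ∧
    (1/((b-a)*(d-c))) * ∫ x in a..b, ∫ y in c..d, f x y ≤
      (f a c + f a d + f b c + f b d) / 4 :=
  hadamard_coordinated_two_dim_general a b c d hab hcd f h1 h2
end
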